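/- Let m ≥ 2, let (Ω, μ) be a probability space, let v_1, ..., v_m : Ω → ℝ^n be integrable measurable maps with means w_i = E[v_i] satisfying E[‖v_i − w_i‖₂²] ≤ δ² for every i ∈ [m], and let g : Ω → ℝ^n be integrable with mean w_0 = E[g] satisfying E[‖g − w_0‖₂²] ≤ δ₀², where δ, δ₀ ≥ 0. Let C_f, C_g ≥ 0, μ₀ ≥ 0, λ ∈ Δ^m, and d ∈ ℝ^n with ‖d‖₂² ≤ 2C_f² + 2μ₀²C_g². Then 2(C_f² + μ₀²C_g²) · E[‖Σ_{i=1}^m λ_i (v_i − w_i) + μ₀ (g − w_0)‖₂²] + 2·ln(m) · E[max_{i ∈ [m]} ⟨v_i − w_i, d⟩²] ≤ 4 (C_f² + μ₀²C_g²) ( δ² + μ₀² δ₀² + m δ² ln m ). -/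

import Mathlib

/-!
Both expectations are bounded through pointwise bounds on the integrands. For the first,
`‖a + b‖² ≤ 2‖a‖² + 2‖b‖²` and Jensen's inequality for the convex function `‖·‖²` give
`‖∑ λᵢ Xᵢ + μ₀ Y‖² ≤ 2 ∑ λᵢ ‖Xᵢ‖² + 2 μ₀² ‖Y‖²`, whose expectation is at most `2δ² + 2μ₀²δ₀²`.
For the second, Cauchy–Schwarz gives `⟪Xᵢ, d⟫² ≤ ‖d‖² ‖Xᵢ‖²`, and the maximum over `i` is at most
the sum over `i`, whose expectation is at most `‖d‖² m δ² ≤ 2(C_f² + μ₀²C_g²) m δ²`.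
-/

open scoped RealInnerProductSpace
open MeasureTheory Finset

section NormedSpace

variable {ι E : Type*} [Fintype ι] [NormedAddCommGroup E] [NormedSpace ℝ E]

theorem norm_sum_smul_sq_le_of_mem_stdSimplex {lam : ι → ℝ} (hlam : lam ∈ stdSimplex ℝ ι)
    (x : ι → E) : ‖∑ i, lam i • x i‖ ^ 2 ≤ ∑ i, lam i * ‖x i‖ ^ 2 := by
  simpa only [smul_eq_mul, Pi.pow_apply] using
    ((convexOn_norm convex_univ).pow (fun _ _ => norm_nonneg _) 2).map_sum_le
      (t := univ) (fun i _ => hlam.1 i) hlam.2 (fun i _ => Set.mem_univ (x i))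

theorem norm_sum_smul_add_smul_sq_le {lam : ι → ℝ} (hlam : lam ∈ stdSimplex ℝ ι)
    (x : ι → E) (c : ℝ) (y : E) :
    ‖∑ i, lam i • x i + c • y‖ ^ 2 ≤ 2 * ∑ i, lam i * ‖x i‖ ^ 2 + 2 * c ^ 2 * ‖y‖ ^ 2 := by
  calc ‖∑ i, lam i • x i + c • y‖ ^ 2 ≤ (‖∑ i, lam i • x i‖ + ‖c • y‖) ^ 2 :=
        pow_le_pow_left₀ (norm_nonneg _) (norm_add_le _ _) 2
    _ ≤ 2 * (‖∑ i, lam i • x i‖ ^ 2 + ‖c • y‖ ^ 2) := add_sq_le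
    _ ≤ 2 * ∑ i, lam i * ‖x i‖ ^ 2 + 2 * c ^ 2 * ‖y‖ ^ 2 := by
        rw [norm_smul, mul_pow, Real.norm_eq_abs, sq_abs]
        linarith [norm_sum_smul_sq_le_of_mem_stdSimplex hlam x]

variable {Ω : Type*} [MeasurableSpace Ω] {μ : Measure Ω}

theorem integral_norm_sum_smul_add_smul_sq_le {X : ι → Ω → E} {Y : Ω → E} {σ σ₀ : ℝ}
    (hX : ∀ i, Integrable (fun ω => ‖X i ω‖ ^ 2) μ) (hXσ : ∀ i, ∫ ω, ‖X i ω‖ ^ 2 ∂μ ≤ σ)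
    (hY : Integrable (fun ω => ‖Y ω‖ ^ 2) μ) (hYσ : ∫ ω, ‖Y ω‖ ^ 2 ∂μ ≤ σ₀)
    {lam : ι → ℝ} (hlam : lam ∈ stdSimplex ℝ ι) (c : ℝ) :
    ∫ ω, ‖∑ i, lam i • X i ω + c • Y ω‖ ^ 2 ∂μ ≤ 2 * σ + 2 * c ^ 2 * σ₀ := by
  have hweighted : Integrable (fun ω => ∑ i, lam i * ‖X i ω‖ ^ 2) μ :=
    integrable_finsetSum _ fun i _ => (hX i).const_mul _
  have hweighted_le : ∑ i, lam i * ∫ ω, ‖X i ω‖ ^ 2 ∂μ ≤ σ :=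
    calc ∑ i, lam i * ∫ ω, ‖X i ω‖ ^ 2 ∂μ ≤ ∑ i, lam i * σ :=
          sum_le_sum fun i _ => mul_le_mul_of_nonneg_left (hXσ i) (hlam.1 i)
      _ = σ := by rw [← sum_mul, hlam.2, one_mul]
  calc ∫ ω, ‖∑ i, lam i • X i ω + c • Y ω‖ ^ 2 ∂μ
      ≤ ∫ ω, 2 * ∑ i, lam i * ‖X i ω‖ ^ 2 + 2 * c ^ 2 * ‖Y ω‖ ^ 2 ∂μ :=
        integral_mono_of_nonneg (ae_of_all _ fun _ => by positivity)
          ((hweighted.const_mul 2).add (hY.const_mul _))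
          (ae_of_all _ fun ω => norm_sum_smul_add_smul_sq_le hlam _ c _)
    _ = 2 * ∑ i, lam i * ∫ ω, ‖X i ω‖ ^ 2 ∂μ + 2 * c ^ 2 * ∫ ω, ‖Y ω‖ ^ 2 ∂μ := by
        rw [integral_add (hweighted.const_mul 2) (hY.const_mul _), integral_const_mul,
          integral_const_mul, integral_finsetSum _ fun i _ => (hX i).const_mul _]
        simp only [integral_const_mul]
    _ ≤ 2 * σ + 2 * c ^ 2 * σ₀ := by gcongr

end NormedSpace

section InnerProductSpace

variable {ι F : Type*} [NormedAddCommGroup F] [InnerProductSpace ℝ F]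

theorem sq_real_inner_le_norm_sq_mul_norm_sq (x y : F) : ⟪x, y⟫ ^ 2 ≤ ‖x‖ ^ 2 * ‖y‖ ^ 2 := by
  rw [← mul_pow, ← sq_abs]
  exact pow_le_pow_left₀ (abs_nonneg _) (abs_real_inner_le_norm x y) 2

theorem sup'_sq_real_inner_le_norm_sq_mul_sum {s : Finset ι} (hs : s.Nonempty) (x : ι → F)
    (d : F) : s.sup' hs (fun i => ⟪x i, d⟫ ^ 2) ≤ ‖d‖ ^ 2 * ∑ i ∈ s, ‖x i‖ ^ 2 :=
  sup'_le _ _ fun i hi =>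
    calc ⟪x i, d⟫ ^ 2 ≤ ‖d‖ ^ 2 * ‖x i‖ ^ 2 := by
          rw [mul_comm]; exact sq_real_inner_le_norm_sq_mul_norm_sq _ _
      _ ≤ ‖d‖ ^ 2 * ∑ i ∈ s, ‖x i‖ ^ 2 :=
          mul_le_mul_of_nonneg_left
            (single_le_sum (f := fun j => ‖x j‖ ^ 2) (fun j _ => by positivity) hi) (by positivity)

variable {Ω : Type*} [MeasurableSpace Ω] {μ : Measure Ω}

theorem integral_sup'_sq_real_inner_le {s : Finset ι} (hs : s.Nonempty) {X : ι → Ω → F} {σ : ℝ}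
    (hX : ∀ i, Integrable (fun ω => ‖X i ω‖ ^ 2) μ) (hXσ : ∀ i, ∫ ω, ‖X i ω‖ ^ 2 ∂μ ≤ σ)
    (d : F) : ∫ ω, s.sup' hs (fun i => ⟪X i ω, d⟫ ^ 2) ∂μ ≤ ‖d‖ ^ 2 * (s.card * σ) := by
  have hsup_nonneg (ω : Ω) : 0 ≤ s.sup' hs (fun i => ⟪X i ω, d⟫ ^ 2) :=
    le_sup'_of_le _ hs.choose_spec (sq_nonneg _)
  calc ∫ ω, s.sup' hs (fun i => ⟪X i ω, d⟫ ^ 2) ∂μ ≤ ∫ ω, ‖d‖ ^ 2 * ∑ i ∈ s, ‖X i ω‖ ^ 2 ∂μ :=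
        integral_mono_of_nonneg (ae_of_all _ hsup_nonneg)
          ((integrable_finsetSum _ fun i _ => hX i).const_mul _)
          (ae_of_all _ fun ω => sup'_sq_real_inner_le_norm_sq_mul_sum hs _ d)
    _ = ‖d‖ ^ 2 * ∑ i ∈ s, ∫ ω, ‖X i ω‖ ^ 2 ∂μ := by
        rw [integral_const_mul, integral_finsetSum _ fun i _ => hX i]
    _ ≤ ‖d‖ ^ 2 * ∑ i ∈ s, σ := by gcongr with i; exact hXσ i
    _ = ‖d‖ ^ 2 * (s.card * σ) := by rw [sum_const, nsmul_eq_mul]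

end InnerProductSpace

/-- Bound on the squared dual norm of the deviation between the stochastic and full
gradients of the preference-regularized MGDA saddle-point subproblem: with means
`w i = E[v i]`, `w₀ = E[g]`, variance bounds `E‖v i - w i‖² ≤ δ²`, `E‖g - w₀‖² ≤ δ₀²`,
`λ ∈ Δ^m` and `‖d‖² ≤ 2C_f² + 2μ₀²C_g²`, one has
`2(C_f² + μ₀²C_g²)·E‖Σ_i λ_i (v_i - w_i) + μ₀(g - w₀)‖² + 2 ln m · E[max_i ⟨v_i - w_i, d⟩²]
  ≤ 4(C_f² + μ₀²C_g²)(δ² + μ₀²δ₀² + m δ² ln m)`. -/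
theorem preference_stochastic_gradient_variance_dual_norm_bound
    {n m : ℕ} (hm : 2 ≤ m)
    {Ω : Type*} [MeasurableSpace Ω] (μ : Measure Ω)
    (v : Fin m → Ω → EuclideanSpace ℝ (Fin n))
    (w : Fin m → EuclideanSpace ℝ (Fin n))
    (δ : ℝ)
    (hvar_int : ∀ i, Integrable (fun ω => ‖v i ω - w i‖ ^ 2) μ)
    (hvar : ∀ i, ∫ ω, ‖v i ω - w i‖ ^ 2 ∂μ ≤ δ ^ 2)
    (g : Ω → EuclideanSpace ℝ (Fin n))
    (w₀ : EuclideanSpace ℝ (Fin n))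
    (δ₀ : ℝ)
    (hgvar_int : Integrable (fun ω => ‖g ω - w₀‖ ^ 2) μ)
    (hgvar : ∫ ω, ‖g ω - w₀‖ ^ 2 ∂μ ≤ δ₀ ^ 2)
    (Cf Cg : ℝ)
    (μ₀ : ℝ)
    (lam : Fin m → ℝ) (hlam : lam ∈ stdSimplex ℝ (Fin m))
    (d : EuclideanSpace ℝ (Fin n)) (hd : ‖d‖ ^ 2 ≤ 2 * Cf ^ 2 + 2 * μ₀ ^ 2 * Cg ^ 2) :
    2 * (Cf ^ 2 + μ₀ ^ 2 * Cg ^ 2) *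
        (∫ ω, ‖(∑ i, lam i • (v i ω - w i)) + μ₀ • (g ω - w₀)‖ ^ 2 ∂μ) +
      2 * Real.log m * (∫ ω, Finset.univ.sup'
        (Finset.univ_nonempty_iff.mpr (Fin.pos_iff_nonempty.mp (by omega)))
        (fun i => ⟪v i ω - w i, d⟫ ^ 2) ∂μ) ≤
      4 * (Cf ^ 2 + μ₀ ^ 2 * Cg ^ 2) *
        (δ ^ 2 + μ₀ ^ 2 * δ₀ ^ 2 + m * δ ^ 2 * Real.log m) := by
  have hcomb := integral_norm_sum_smul_add_smul_sq_le
    (X := fun i ω => v i ω - w i) hvar_int hvar hgvar_int hgvar hlam μ₀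
  have hmax := integral_sup'_sq_real_inner_le (X := fun i ω => v i ω - w i)
    (univ_nonempty_iff.mpr ⟨⟨0, by omega⟩⟩) hvar_int hvar d
  rw [card_univ, Fintype.card_fin] at hmax
  have hd_scaled : ‖d‖ ^ 2 * (m * δ ^ 2) ≤ 2 * (Cf ^ 2 + μ₀ ^ 2 * Cg ^ 2) * (m * δ ^ 2) := by
    gcongr; linarith
  calc _ ≤ 2 * (Cf ^ 2 + μ₀ ^ 2 * Cg ^ 2) * (2 * δ ^ 2 + 2 * μ₀ ^ 2 * δ₀ ^ 2) +
        2 * Real.log m * (2 * (Cf ^ 2 + μ₀ ^ 2 * Cg ^ 2) * (m * δ ^ 2)) :=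
        add_le_add (mul_le_mul_of_nonneg_left hcomb (by positivity))
          (mul_le_mul_of_nonneg_left (hmax.trans hd_scaled) (by positivity))
    _ = _ := by ring
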